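/- arXiv:1310.3147 — 4 statements merged into one kernel-verified Lean document; each statement's English description precedes it below -/
import Mathlib

section
/- The vector |R₀⟩ = √(2/7)(|0,1⟩ + |1,0⟩) − (1/√7)(|u₁⟩ + |u₂⟩ − |u₃⟩) is a unit eigenvector of the 5×5 triangle walk matrix U₀ with eigenvalue −1. -/
/-! `R₀ = (1/√7) v` with `v = (√2, √2, -1, -1, 1)`. The squared norm of `v` is
`2 + 2 + 1 + 1 + 1 = 7`, and `U₀ v = -v` is a row-by-row check that only uses `√2 · √2 = 2`. -/

/-- The 5×5 triangle-walk matrix on ℂ⁵, basis order `|0,1⟩, |1,0⟩, |u₁⟩, |u₂⟩, |u₃⟩`. -/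
noncomputable def triangleWalk : Matrix (Fin 5) (Fin 5) ℂ :=
  !![0, -1, 0, 0, 0;
     -1/3, 0, 0, 2 * Real.sqrt 2 / 3, 0;
     2 * Real.sqrt 2 / 3, 0, 0, 1/3, 0;
     0, 0, 0, 0, 1;
     0, 0, 1, 0, 0]

/-- The eigenvector `|R₀⟩ = √(2/7)(|0,1⟩+|1,0⟩) − (1/√7)(|u₁⟩+|u₂⟩−|u₃⟩)`. -/
noncomputable def R0 : Fin 5 → ℂ :=
  ![Real.sqrt (2/7), Real.sqrt (2/7),
    -(1 / Real.sqrt 7), -(1 / Real.sqrt 7), 1 / Real.sqrt 7]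

open Matrix

noncomputable def unnormalizedR0 : Fin 5 → ℂ := ![Real.sqrt 2, Real.sqrt 2, -1, -1, 1]

lemma Complex.ofReal_sqrt_sq {x : ℝ} (hx : 0 ≤ x) : (Real.sqrt x : ℂ) ^ 2 = x := by
  rw [← Complex.ofReal_pow, Real.sq_sqrt hx]

lemma R0_eq_inv_sqrt_seven_smul : R0 = (Real.sqrt 7 : ℂ)⁻¹ • unnormalizedR0 := by
  ext i
  fin_cases i <;> simp [R0, unnormalizedR0, div_eq_inv_mul]

lemma star_unnormalizedR0_dotProduct_self : star unnormalizedR0 ⬝ᵥ unnormalizedR0 = 7 := by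
  have h2 : (Real.sqrt 2 : ℂ) ^ 2 = 2 := by exact_mod_cast Complex.ofReal_sqrt_sq zero_le_two
  simp only [unnormalizedR0, dotProduct, Fin.sum_univ_five, Pi.star_apply, Matrix.cons_val,
    Complex.star_def, map_neg, map_one, Complex.conj_ofReal]
  linear_combination 2 * h2

lemma triangleWalk_mulVec_unnormalizedR0 : triangleWalk *ᵥ unnormalizedR0 = -unnormalizedR0 := by
  have h2 : (Real.sqrt 2 : ℂ) ^ 2 = 2 := by exact_mod_cast Complex.ofReal_sqrt_sq zero_le_two
  ext i
  fin_cases i <;> simp [triangleWalk, unnormalizedR0] <;> grind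

theorem stmt10 :
    dotProduct (star R0) R0 = 1 ∧
    triangleWalk.mulVec R0 = (-1 : ℂ) • R0 := by
  rw [R0_eq_inv_sqrt_seven_smul]
  constructor
  · have h7 : (Real.sqrt 7 : ℂ) ^ 2 = 7 := by exact_mod_cast Complex.ofReal_sqrt_sq (by norm_num)
    have h7ne : (Real.sqrt 7 : ℂ) ≠ 0 := by norm_num
    rw [star_smul, smul_dotProduct, dotProduct_smul, star_unnormalizedR0_dotProduct_self,
      Complex.star_def, map_inv₀, Complex.conj_ofReal, smul_eq_mul, smul_eq_mul, ← h7]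
    field_simp
  · rw [mulVec_smul, triangleWalk_mulVec_unnormalizedR0, smul_neg, neg_one_smul]
end

section
/- The eigenvalue −1 of the 5×5 triangle walk matrix U₀ has geometric multiplicity 1, with eigenspace spanned by |R₀⟩ = √(2/7)(|0,1⟩ + |1,0⟩) − (1/√7)(|u₁⟩ + |u₂⟩ − |u₃⟩). -/
/-!
Rows 0, 3, 4 and 1 of `U₀ v = -v` read `v₁ = v₀`, `v₄ = -v₃`, `v₂ = -v₄` and `√2 v₃ = -v₀`,
so every solution is a multiple of `(√2, √2, -1, -1, 1) = √7 R₀`; conversely this vector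
satisfies row 2 as well because `(√2)² = 2`.
-/

open Matrix

theorem Matrix.eigenspace_toLin'_eq_span_singleton {n R : Type*} [Fintype n] [DecidableEq n]
    [CommRing R] {A : Matrix n n R} {μ : R} {x : n → R} (hx : A *ᵥ x = μ • x)
    (h : ∀ v, A *ᵥ v = μ • v → ∃ c : R, c • x = v) :
    Module.End.eigenspace (Matrix.toLin' A) μ = Submodule.span R {x} := by
  ext v
  rw [Module.End.mem_eigenspace_iff, Matrix.toLin'_apply, Submodule.mem_span_singleton]
  refine ⟨h v, ?_⟩
  rintro ⟨c, rfl⟩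
  rw [Matrix.mulVec_smul, hx, smul_comm]

namespace TriangleWalk

noncomputable def negOneEigenvector : Fin 5 → ℂ := ![((√2 : ℝ) : ℂ), ((√2 : ℝ) : ℂ), -1, -1, 1]

lemma R0_eq_smul_negOneEigenvector : R0 = ((√7 : ℝ) : ℂ)⁻¹ • negOneEigenvector := by
  ext i
  fin_cases i <;> simp [R0, negOneEigenvector, div_eq_inv_mul]

lemma mulVec_negOneEigenvector :
    triangleWalk *ᵥ negOneEigenvector = (-1 : ℂ) • negOneEigenvector := by
  have sqrt_two_mul_self : ((√2 : ℝ) : ℂ) * ((√2 : ℝ) : ℂ) = 2 := by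
    exact_mod_cast Real.mul_self_sqrt (show (0 : ℝ) ≤ 2 by norm_num)
  ext i
  fin_cases i <;> simp [triangleWalk, negOneEigenvector, Matrix.mulVec, dotProduct, Fin.sum_univ_five]
  · ring
  · linear_combination (2 / 3 : ℂ) * sqrt_two_mul_self

lemma exists_smul_negOneEigenvector {v : Fin 5 → ℂ} (hv : triangleWalk *ᵥ v = (-1 : ℂ) • v) :
    ∃ c : ℂ, c • negOneEigenvector = v := by
  have row : ∀ i, (triangleWalk *ᵥ v) i = -v i := fun i => by simp [hv]
  have h0 := row 0
  have h1 := row 1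
  have h3 := row 3
  have h4 := row 4
  simp [triangleWalk, Matrix.mulVec, dotProduct, Fin.sum_univ_five] at h0 h1 h3 h4
  refine ⟨-v 3, ?_⟩
  ext i
  fin_cases i <;> simp [negOneEigenvector]
  · linear_combination (3 / 2 : ℂ) * h0 - (3 / 2 : ℂ) * h1
  · linear_combination (1 / 2 : ℂ) * h0 - (3 / 2 : ℂ) * h1
  · linear_combination h3 - h4
  · linear_combination -h3

lemma negOneEigenvector_ne_zero : negOneEigenvector ≠ 0 := fun h => by
  simpa [negOneEigenvector] using congrFun h 4

end TriangleWalk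

open TriangleWalk in
theorem stmt12 :
    Module.End.eigenspace (Matrix.toLin' triangleWalk) (-1) = Submodule.span ℂ {R0} ∧
    Module.finrank ℂ (Module.End.eigenspace (Matrix.toLin' triangleWalk) (-1)) = 1 := by
  have h_eigenspace : Module.End.eigenspace (Matrix.toLin' triangleWalk) (-1) =
      Submodule.span ℂ {negOneEigenvector} :=
    Matrix.eigenspace_toLin'_eq_span_singleton mulVec_negOneEigenvector
      fun _ => exists_smul_negOneEigenvector
  have h_span : Submodule.span ℂ {R0} = Submodule.span ℂ {negOneEigenvector} := by
    have h7 : ((√7 : ℝ) : ℂ) ≠ 0 := by exact_mod_cast (Real.sqrt_pos.2 (by norm_num)).ne'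
    rw [R0_eq_smul_negOneEigenvector, Submodule.span_singleton_smul_eq (inv_ne_zero h7).isUnit]
  rw [h_span, h_eigenspace]
  exact ⟨rfl, finrank_span_singleton negOneEigenvector_ne_zero⟩
end

section
/- In the N-edge star graph walk, the uniform initial state |ψ_init⟩ = (1/√N)∑_{j=1}^N (α|0,j⟩ + β|j,0⟩) with |α|² + |β|² = 1 satisfies ‖ |ψ_init⟩ − (α|out⟩ + β|in⟩) ‖ ≤ 2√(2/N), where |in⟩ = (1/√(N−1))∑_{j=2}^N |j,0⟩ and |out⟩ = (1/√(N−1))∑_{j=2}^N |0,j⟩; i.e., the initial state is within O(1/√N) of a state supported on the left side. -/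
/-!
On each side of the star, the difference between the uniform vector on all N edges and the
uniform vector on the N - 1 edges other than edge 0 has coefficient 1/√N on edge 0 and
1/√N - 1/√(N-1) on every other edge. By Pythagoras its squared norm is
1/N + (1 - √((N-1)/N))², which is at most 2/N because √N - √(N-1) ≤ 1. The full difference is
α times the out-side vector plus β times the in-side one, and |α|, |β| ≤ 1.
-/

open Finset

lemma Real.sqrt_le_sqrt_sub_one_add_one {x : ℝ} (hx : 1 ≤ x) : √x ≤ √(x - 1) + 1 := by
  rw [Real.sqrt_le_iff]
  refine ⟨by positivity, ?_⟩
  nlinarith [Real.sq_sqrt (sub_nonneg.2 hx), Real.sqrt_nonneg (x - 1)]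

lemma Real.sq_one_div_sqrt_sub_one_div_sqrt_sub_one_mul_le {x : ℝ} (hx : 1 ≤ x) :
    (1 / √x - 1 / √(x - 1)) ^ 2 * (x - 1) ≤ 1 / x := by
  rcases hx.eq_or_lt with rfl | hx'
  · simp
  set a := √(x - 1) with ha
  have ha0 : 0 < a := Real.sqrt_pos.2 (by linarith)
  have hb0 : 0 < √x := Real.sqrt_pos.2 (by linarith)
  have hab : 0 ≤ √x - a := sub_nonneg.2 (Real.sqrt_le_sqrt (by linarith))
  have hab' : √x - a ≤ 1 := by linarith [Real.sqrt_le_sqrt_sub_one_add_one hx]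
  calc (1 / √x - 1 / a) ^ 2 * (x - 1) = ((√x - a) / √x) ^ 2 := by
        rw [← Real.sq_sqrt (by linarith : 0 ≤ x - 1), ← ha]
        field_simp
        ring
    _ ≤ (1 / √x) ^ 2 := by gcongr
    _ = 1 / x := by rw [div_pow, Real.sq_sqrt (by linarith), one_pow]

namespace Orthonormal

variable {𝕜 E ι : Type*} [RCLike 𝕜] [NormedAddCommGroup E] [InnerProductSpace 𝕜 E]
  {v : ι → E}

lemma norm_sum_sq (hv : Orthonormal 𝕜 v) (s : Finset ι) : ‖∑ i ∈ s, v i‖ ^ 2 = #s := by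
  have h := hv.inner_sum (fun _ ↦ 1) (fun _ ↦ 1) s
  simp only [one_smul, map_one, mul_one, sum_const, nsmul_eq_mul] at h
  rw [@norm_sq_eq_re_inner 𝕜, h]
  simp

lemma inner_sum_erase_eq_zero [DecidableEq ι] (hv : Orthonormal 𝕜 v) (s : Finset ι) (i : ι) :
    inner 𝕜 (v i) (∑ j ∈ s.erase i, v j) = 0 := by
  rw [inner_sum]
  exact sum_eq_zero fun j hj ↦ hv.inner_eq_zero (ne_of_mem_erase hj).symm

lemma norm_uniform_sub_uniform_erase_le [Fintype ι] [DecidableEq ι] (hv : Orthonormal 𝕜 v)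
    (i₀ : ι) :
    ‖(1 / √(Fintype.card ι) : 𝕜) • ∑ i, v i -
        (1 / √(Fintype.card ι - 1) : 𝕜) • ∑ i ∈ univ.erase i₀, v i‖ ≤
      √(2 / Fintype.card ι) := by
  set n : ℝ := (Fintype.card ι : ℝ)
  set S := ∑ i ∈ univ.erase i₀, v i
  have hcard : 0 < Fintype.card ι := Fintype.card_pos_iff.2 ⟨i₀⟩
  have hn : 1 ≤ n := by simpa [n, Nat.one_le_iff_ne_zero] using hcard.ne'
  have hS : ‖S‖ ^ 2 = n - 1 := by
    rw [hv.norm_sum_sq, card_erase_of_mem (mem_univ i₀), card_univ, Nat.cast_pred hcard]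
  have hdecomp : (1 / √n : 𝕜) • ∑ i, v i - (1 / √(n - 1) : 𝕜) • S =
      ((1 / √n : ℝ) : 𝕜) • v i₀ + ((1 / √n - 1 / √(n - 1) : ℝ) : 𝕜) • S := by
    rw [← add_sum_erase _ _ (mem_univ i₀)]
    push_cast
    module
  have horth :
      inner 𝕜 (((1 / √n : ℝ) : 𝕜) • v i₀) (((1 / √n - 1 / √(n - 1) : ℝ) : 𝕜) • S) = 0 := by
    rw [inner_smul_left, inner_smul_right, hv.inner_sum_erase_eq_zero, mul_zero, mul_zero]
  rw [hdecomp, Real.le_sqrt (norm_nonneg _) (by positivity), @norm_add_sq 𝕜, horth, map_zero,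
    mul_zero, add_zero, norm_smul, norm_smul, hv.norm_eq_one, RCLike.norm_ofReal,
    RCLike.norm_ofReal, mul_pow, mul_pow, sq_abs, sq_abs, hS, one_pow, mul_one]
  calc (1 / √n) ^ 2 + (1 / √n - 1 / √(n - 1)) ^ 2 * (n - 1) ≤ 1 / n + 1 / n := by
        gcongr
        · rw [div_pow, one_pow, Real.sq_sqrt (by linarith)]
        · exact Real.sq_one_div_sqrt_sub_one_div_sqrt_sub_one_mul_le hn
    _ = 2 / n := by ring

end Orthonormal

lemma norm_smul_add_smul_le_two_mul {𝕜 E : Type*} [NormedField 𝕜] [SeminormedAddCommGroup E]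
    [NormedSpace 𝕜 E] {α β : 𝕜} {x y : E} {r : ℝ} (hα : ‖α‖ ≤ 1) (hβ : ‖β‖ ≤ 1)
    (hx : ‖x‖ ≤ r) (hy : ‖y‖ ≤ r) : ‖α • x + β • y‖ ≤ 2 * r := by
  calc ‖α • x + β • y‖ ≤ ‖α‖ * ‖x‖ + ‖β‖ * ‖y‖ := by
        rw [← norm_smul, ← norm_smul]
        exact norm_add_le _ _
    _ ≤ 1 * r + 1 * r := by gcongr
    _ = 2 * r := by ring

theorem stmt16_general (N : ℕ) [NeZero N] (α β : ℂ)
    (hαβ : ‖α‖ ^ 2 + ‖β‖ ^ 2 = 1) :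
    ‖((1 / Real.sqrt N : ℂ) •
        ∑ j : Fin N, (α • EuclideanSpace.single (Sum.inr j) (1 : ℂ) +
          β • EuclideanSpace.single (Sum.inl j) (1 : ℂ)) :
          EuclideanSpace ℂ (Fin N ⊕ Fin N)) -
      (α • ((1 / Real.sqrt (N - 1) : ℂ) •
          ∑ j ∈ Finset.univ.erase (0 : Fin N),
            EuclideanSpace.single (Sum.inr j) (1 : ℂ)) +
       β • ((1 / Real.sqrt (N - 1) : ℂ) •
          ∑ j ∈ Finset.univ.erase (0 : Fin N),
            EuclideanSpace.single (Sum.inl j) (1 : ℂ)))‖ ≤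
      2 * Real.sqrt (2 / N) := by
  have he : Orthonormal ℂ fun k : Fin N ⊕ Fin N ↦ EuclideanSpace.single k (1 : ℂ) :=
    EuclideanSpace.orthonormal_single
  have hout := (he.comp _ Sum.inr_injective).norm_uniform_sub_uniform_erase_le 0
  have hin := (he.comp _ Sum.inl_injective).norm_uniform_sub_uniform_erase_le 0
  simp only [Function.comp_apply, Fintype.card_fin] at hout hin
  have hα : ‖α‖ ≤ 1 := by nlinarith [norm_nonneg α, sq_nonneg ‖β‖]
  have hβ : ‖β‖ ≤ 1 := by nlinarith [norm_nonneg β, sq_nonneg ‖α‖]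
  refine le_of_eq_of_le ?_ (norm_smul_add_smul_le_two_mul hα hβ hout hin)
  rw [sum_add_distrib, ← smul_sum, ← smul_sum]
  congr 1
  module

theorem stmt16 (N : ℕ) [NeZero N] (hN : 2 ≤ N) (α β : ℂ)
    (hαβ : ‖α‖ ^ 2 + ‖β‖ ^ 2 = 1) :
    ‖((1 / Real.sqrt N : ℂ) •
        ∑ j : Fin N, (α • EuclideanSpace.single (Sum.inr j) (1 : ℂ) +
          β • EuclideanSpace.single (Sum.inl j) (1 : ℂ)) :
          EuclideanSpace ℂ (Fin N ⊕ Fin N)) -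
      (α • ((1 / Real.sqrt (N - 1) : ℂ) •
          ∑ j ∈ Finset.univ.erase (0 : Fin N),
            EuclideanSpace.single (Sum.inr j) (1 : ℂ)) +
       β • ((1 / Real.sqrt (N - 1) : ℂ) •
          ∑ j ∈ Finset.univ.erase (0 : Fin N),
            EuclideanSpace.single (Sum.inl j) (1 : ℂ)))‖ ≤
      2 * Real.sqrt (2 / N) :=
  stmt16_general N α β hαβ
end

section
/- The characteristic polynomial of the 5×5 triangle walk matrix U₀ has −1 as a simple root, and all roots of this characteristic polynomial have modulus 1. -/
open Polynomial Matrix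

theorem charpoly_of_triangleWalk_pattern {R : Type*} [CommRing R] (p q r s : R) :
    (!![0, -1, 0, 0, 0; p, 0, 0, q, 0; r, 0, 0, s, 0; 0, 0, 0, 0, 1; 0, 0, 1, 0, 0] :
      Matrix (Fin 5) (Fin 5) R).charpoly =
      X ^ 5 + C p * X ^ 3 - C s * X ^ 2 + C (q * r - p * s) := by
  rw [charpoly]
  simp [det_succ_row_zero, Fin.sum_univ_succ, charmatrix_apply, Fin.succAbove]
  ring

theorem charpoly_triangleWalk :
    triangleWalk.charpoly = (X ^ 4 - X ^ 3 + C (2 / 3) * X ^ 2 - X + 1) * (X - C (-1)) := by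
  have hconst : (2 * Real.sqrt 2 / 3 : ℂ) * (2 * Real.sqrt 2 / 3) - -1 / 3 * (1 / 3) = 1 := by
    have : (Real.sqrt 2 : ℂ) ^ 2 = 2 := by
      rw [← Complex.ofReal_pow, Real.sq_sqrt zero_le_two]; norm_num
    linear_combination (4 / 9 : ℂ) * this
  have h₁ : C (-1 / 3 : ℂ) = -C (1 / 3) := by rw [← C_neg]; norm_num
  have h₂ : C (2 / 3 : ℂ) = 2 * C (1 / 3) := by rw [← C_ofNat, ← C_mul]; norm_num
  have h₃ : 3 * C (1 / 3 : ℂ) = 1 := by rw [← C_ofNat, ← C_mul]; norm_num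
  rw [triangleWalk, charpoly_of_triangleWalk_pattern, hconst, h₁, h₂, C_1, C_neg, C_1]
  linear_combination -(X ^ 3 + X ^ 2) * h₃

theorem norm_eq_one_of_sq_sub_mul_add_one_eq_zero {y : ℝ} (hy : y ^ 2 < 4) {z : ℂ}
    (hz : z ^ 2 - y * z + 1 = 0) : ‖z‖ = 1 := by
  have hre : z.re ^ 2 - z.im ^ 2 - y * z.re + 1 = 0 := by
    simpa [sq] using congrArg Complex.re hz
  have him : (2 * z.re - y) * z.im = 0 := by
    have := congrArg Complex.im hz
    simp only [sq, Complex.add_im, Complex.sub_im, Complex.mul_im, Complex.ofReal_re,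
      Complex.ofReal_im, Complex.one_im, Complex.zero_im] at this
    linear_combination this
  have hre' : z.re = y / 2 := by
    rcases mul_eq_zero.1 him with h | h
    · linarith
    · rw [h] at hre
      nlinarith [sq_nonneg (2 * z.re - y)]
  rw [Complex.norm_def, Complex.normSq_apply, Real.sqrt_eq_one]
  rw [hre'] at hre ⊢
  linarith

theorem exists_quartic_factorization : ∃ y₁ y₂ : ℝ, y₁ ^ 2 < 4 ∧ y₂ ^ 2 < 4 ∧
    ∀ z : ℂ, z ^ 4 - z ^ 3 + 2 / 3 * z ^ 2 - z + 1 =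
      (z ^ 2 - y₁ * z + 1) * (z ^ 2 - y₂ * z + 1) := by
  obtain ⟨ρ, hρ₀, hρ⟩ : ∃ ρ : ℝ, 0 ≤ ρ ∧ ρ ^ 2 = 19 / 3 :=
    ⟨Real.sqrt (19 / 3), Real.sqrt_nonneg _, Real.sq_sqrt (by norm_num)⟩
  have hρ' : (ρ : ℂ) ^ 2 = 19 / 3 := by rw [← Complex.ofReal_pow, hρ]; norm_num
  refine ⟨(1 + ρ) / 2, (1 - ρ) / 2, ?_, ?_, fun z ↦ ?_⟩
  · nlinarith
  · nlinarith
  · push_cast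
    linear_combination (z ^ 2 / 4) * hρ'

theorem stmt18 :
    (Matrix.charpoly triangleWalk).rootMultiplicity (-1) = 1 ∧
    ∀ μ ∈ (Matrix.charpoly triangleWalk).roots, ‖μ‖ = 1 := by
  have hcp := charpoly_triangleWalk
  set Q : ℂ[X] := X ^ 4 - X ^ 3 + C (2 / 3) * X ^ 2 - X + 1
  constructor
  · have hQ : ¬Q.IsRoot (-1) := by simp [Q]; norm_num
    rw [hcp, ← pow_one (X - C (-1)),
      rootMultiplicity_mul_X_sub_C_pow (fun h ↦ hQ (by simp [h])), rootMultiplicity_eq_zero hQ]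
  · intro μ hμ
    obtain ⟨y₁, y₂, hy₁, hy₂, hfactor⟩ := exists_quartic_factorization
    have hroot : (μ ^ 4 - μ ^ 3 + 2 / 3 * μ ^ 2 - μ + 1) * (μ + 1) = 0 := by
      simpa [hcp, Q] using (mem_roots'.1 hμ).2
    rw [hfactor] at hroot
    rcases mul_eq_zero.1 hroot with h | h
    · rcases mul_eq_zero.1 h with h | h
      · exact norm_eq_one_of_sq_sub_mul_add_one_eq_zero hy₁ h
      · exact norm_eq_one_of_sq_sub_mul_add_one_eq_zero hy₂ h
    · simp [eq_neg_of_add_eq_zero_left h]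
end
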